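/- arXiv:1910.06309 — 5 statements merged into one kernel-verified Lean document; each statement's English description precedes it below -/
import Mathlib

section
/- For every integer n ≥ 2 and every element p of R_n = ℚ[x, y₁, …, yₙ]/(x·y₁, …, x·yₙ), p is a non-zero-divisor of R_n if and only if both πₓ(p) ≠ 0 and π_y(p) ≠ 0. -/
open MvPolynomial

/-- The ideal `(x·y₁, …, x·yₙ)` in `ℚ[x, y₁, …, yₙ]`, where `x = X 0` and
`yᵢ = X i.succ` in `MvPolynomial (Fin (n+1)) ℚ`. -/
noncomputable def relIdeal (n : ℕ) : Ideal (MvPolynomial (Fin (n + 1)) ℚ) :=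
  Ideal.span (Set.range fun i : Fin n => X 0 * X i.succ)

/-- The ring `R_n = ℚ[x, y₁, …, yₙ]/(x·y₁, …, x·yₙ)`. -/
abbrev Rring (n : ℕ) := MvPolynomial (Fin (n + 1)) ℚ ⧸ relIdeal n

/-- The assignment `x ↦ x`, `yᵢ ↦ 0`. -/
noncomputable def pxVals (n : ℕ) : Fin (n + 1) → Polynomial ℚ :=
  Fin.cases Polynomial.X fun _ => 0

/-- The assignment `x ↦ 0`, `yᵢ ↦ yᵢ`. -/
noncomputable def pyVals (n : ℕ) : Fin (n + 1) → MvPolynomial (Fin n) ℚ :=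
  Fin.cases 0 fun j => X j

/-- The ℚ-algebra homomorphism `πₓ : R_n → ℚ[x]`, `x̄ ↦ x`, `ȳᵢ ↦ 0`. -/
noncomputable def piX (n : ℕ) : Rring n →ₐ[ℚ] Polynomial ℚ :=
  Ideal.Quotient.liftₐ (relIdeal n) (aeval (pxVals n))
    (by
      intro a ha
      have h : relIdeal n ≤ RingHom.ker (aeval (R := ℚ) (pxVals n)) := by
        rw [relIdeal, Ideal.span_le]
        rintro _ ⟨i, rfl⟩
        simp [RingHom.mem_ker, pxVals]
      exact RingHom.mem_ker.mp (h ha))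

/-- The ℚ-algebra homomorphism `π_y : R_n → ℚ[y₁, …, yₙ]`, `x̄ ↦ 0`, `ȳᵢ ↦ yᵢ`. -/
noncomputable def piY (n : ℕ) : Rring n →ₐ[ℚ] MvPolynomial (Fin n) ℚ :=
  Ideal.Quotient.liftₐ (relIdeal n) (aeval (pyVals n))
    (by
      intro a ha
      have h : relIdeal n ≤ RingHom.ker (aeval (R := ℚ) (pyVals n)) := by
        rw [relIdeal, Ideal.span_le]
        rintro _ ⟨i, rfl⟩
        simp [RingHom.mem_ker, pyVals]
      exact RingHom.mem_ker.mp (h ha))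

/-!
Under `MvPolynomial.finSuccEquiv`, `ℚ[x, y₁, …, yₙ]` becomes `A[x]` with
`A = ℚ[y₁, …, yₙ]`; `πₓ` reduces the coefficients modulo `(y₁, …, yₙ)` and `π_y` evaluates at
`x = 0`. A polynomial killed by both is `x · g` with all coefficients of `g` in `(y₁, …, yₙ)`,
hence lies in `(x·y₁, …, x·yₙ)`: the pair `(πₓ, π_y)` is injective on `R_n`. As both targets are
domains, `p` is a non-zero-divisor once both projections are nonzero; conversely `x̄ p = 0` if
`πₓ(p) = 0`, and `ȳ₁ p = 0` if `π_y(p) = 0`.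
-/

theorem mem_nonZeroDivisors_iff_map_ne_zero {R S T F G : Type*} [CommMonoidWithZero R]
    [MonoidWithZero S] [NoZeroDivisors S] [MonoidWithZero T] [NoZeroDivisors T]
    [FunLike F R S] [MonoidWithZeroHomClass F R S] [FunLike G R T] [MonoidWithZeroHomClass G R T]
    (f : F) (g : G) (hfg : ∀ r, f r = 0 → g r = 0 → r = 0)
    {a b : R} (ha : a ≠ 0) (hga : g a = 0) (hb : b ≠ 0) (hfb : f b = 0) {p : R} :
    p ∈ nonZeroDivisors R ↔ f p ≠ 0 ∧ g p ≠ 0 := by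
  rw [mem_nonZeroDivisors_iff_right]
  refine ⟨fun hp => ⟨fun hfp => ha (hp a ?_), fun hgp => hb (hp b ?_)⟩, ?_⟩
  · exact hfg _ (by rw [map_mul, hfp, mul_zero]) (by rw [map_mul, hga, zero_mul])
  · exact hfg _ (by rw [map_mul, hfb, zero_mul]) (by rw [map_mul, hgp, mul_zero])
  · rintro ⟨hfp, hgp⟩ r hr
    exact hfg r ((mul_eq_zero.mp (by rw [← map_mul, hr, map_zero])).resolve_right hfp)
      ((mul_eq_zero.mp (by rw [← map_mul, hr, map_zero])).resolve_right hgp)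

theorem Polynomial.mem_span_X_mul_map_C {R : Type*} [CommRing R] {J : Ideal R} {f : Polynomial R}
    (h0 : f.coeff 0 = 0) (hJ : ∀ k, f.coeff k ∈ J) :
    f ∈ Ideal.span {Polynomial.X} * J.map Polynomial.C :=
  Ideal.mem_span_singleton_mul.mpr ⟨f.divX,
    Ideal.mem_map_C_iff.mpr fun k => by simpa only [Polynomial.coeff_divX] using hJ (k + 1),
    by simpa [h0] using f.X_mul_divX_add⟩

theorem MvPolynomial.mem_idealOfVars_of_constantCoeff_eq_zero {σ R : Type*} [CommSemiring R]
    {p : MvPolynomial σ R} (h : constantCoeff p = 0) : p ∈ idealOfVars σ R := by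
  rw [← pow_one (idealOfVars σ R), mem_pow_idealOfVars_iff']
  intro x hx
  rw [Nat.lt_one_iff, Finsupp.degree_eq_zero_iff] at hx
  rwa [hx, ← constantCoeff_eq]

theorem span_X_mul_map_C_idealOfVars_le_map_relIdeal (n : ℕ) :
    Ideal.span {Polynomial.X} * (idealOfVars (Fin n) ℚ).map Polynomial.C ≤
      (relIdeal n).map (finSuccEquiv ℚ n) := by
  rw [idealOfVars, Ideal.map_span, Ideal.span_mul_span', Ideal.span_le]
  rintro _ ⟨_, rfl, _, ⟨_, ⟨i, rfl⟩, rfl⟩, rfl⟩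
  dsimp only
  rw [SetLike.mem_coe, ← finSuccEquiv_X_zero, ← finSuccEquiv_X_succ, ← map_mul]
  exact Ideal.mem_map_of_mem _ (Ideal.subset_span ⟨i, rfl⟩)

theorem piX_mk (n : ℕ) (q : MvPolynomial (Fin (n + 1)) ℚ) :
    piX n (Ideal.Quotient.mk _ q) = (finSuccEquiv ℚ n q).map constantCoeff := by
  suffices (aeval (pxVals n)).toRingHom =
      (Polynomial.mapRingHom constantCoeff).comp (finSuccEquiv ℚ n).toRingHom from
    congr($this q)
  refine MvPolynomial.ringHom_ext (fun a => by simp [finSuccEquiv_apply]) fun i => ?_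
  cases i using Fin.cases <;> simp [pxVals, finSuccEquiv_X_zero, finSuccEquiv_X_succ]

theorem piY_mk (n : ℕ) (q : MvPolynomial (Fin (n + 1)) ℚ) :
    piY n (Ideal.Quotient.mk _ q) = (finSuccEquiv ℚ n q).eval 0 := by
  suffices (aeval (pyVals n)).toRingHom =
      (Polynomial.evalRingHom 0).comp (finSuccEquiv ℚ n).toRingHom from
    congr($this q)
  refine MvPolynomial.ringHom_ext (fun a => by simp [finSuccEquiv_apply]) fun i => ?_
  cases i using Fin.cases <;> simp [pyVals, finSuccEquiv_X_zero, finSuccEquiv_X_succ]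

theorem eq_zero_of_piX_eq_zero_of_piY_eq_zero {n : ℕ} {p : Rring n}
    (hx : piX n p = 0) (hy : piY n p = 0) : p = 0 := by
  obtain ⟨q, rfl⟩ := Ideal.Quotient.mk_surjective p
  rw [piX_mk] at hx
  rw [piY_mk, ← Polynomial.coeff_zero_eq_eval_zero] at hy
  have hcoeff (k : ℕ) : (finSuccEquiv ℚ n q).coeff k ∈ idealOfVars (Fin n) ℚ :=
    mem_idealOfVars_of_constantCoeff_eq_zero <| by
      simpa using congr(Polynomial.coeff $hx k)
  have hmem := span_X_mul_map_C_idealOfVars_le_map_relIdeal n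
    (Polynomial.mem_span_X_mul_map_C hy hcoeff)
  obtain ⟨q', hq', hq'q⟩ := (Ideal.mem_map_of_equiv _ _).mp hmem
  rwa [Ideal.Quotient.eq_zero_iff_mem, ← (finSuccEquiv ℚ n).injective hq'q]

/-- For every integer `n ≥ 2` and every `p ∈ R_n`, `p` is a non-zero-divisor of `R_n`
if and only if `πₓ(p) ≠ 0` and `π_y(p) ≠ 0`. -/
theorem mem_nonZeroDivisors_iff_proj_ne_zero (n : ℕ) (hn : 2 ≤ n) (p : Rring n) :
    p ∈ nonZeroDivisors (Rring n) ↔ piX n p ≠ 0 ∧ piY n p ≠ 0 := by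
  let y₁ : Fin n := ⟨0, by omega⟩
  refine mem_nonZeroDivisors_iff_map_ne_zero (piX n) (piY n)
    (fun _ => eq_zero_of_piX_eq_zero_of_piY_eq_zero)
    (a := Ideal.Quotient.mk _ (X 0)) ?_ ?_ (b := Ideal.Quotient.mk _ (X y₁.succ)) ?_ ?_
  · exact ne_zero_of_map (f := piX n) (by simp [piX_mk, finSuccEquiv_X_zero])
  · simp [piY_mk, finSuccEquiv_X_zero]
  · exact ne_zero_of_map (f := piY n) (by simp [piY_mk, finSuccEquiv_X_succ])
  · simp [piX_mk, finSuccEquiv_X_succ]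
end

section
/- For every integer n ≥ 2, the map p ↦ (πₓ(p), π_y(p)) is an injective ℚ-algebra homomorphism from R_n = ℚ[x, y₁, …, yₙ]/(x·y₁, …, x·yₙ) into ℚ[x] × ℚ[y₁, …, yₙ], and its range is exactly the subalgebra of pairs (f, g) whose constant terms agree; thus R_n is isomorphic as a ℚ-algebra to the fiber product {(f, g) ∈ ℚ[x] × ℚ[y₁, …, yₙ] : f(0) = g(0, …, 0)}. -/
open MvPolynomial

/-!
Under `finSuccEquiv`, `ℚ[x, y₁, …, yₙ] ≃ A[x]` with `A = ℚ[y₁, …, yₙ]`, and the pair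
`(πₓ, π_y)` becomes `P ↦ (P mod 𝔪, P(0))`, where `𝔪 = (y₁, …, yₙ)` is the augmentation ideal of
`A`. A polynomial killed by both has zero constant term and all coefficients in `𝔪`, so it is
`x · Q` with `Q ∈ 𝔪[x]`, i.e. it lies in `(x·y₁, …, x·yₙ)`. Conversely, a pair `(f, g)` with
`f(0) = g(0)` is hit by `f + g - f(0)`.
-/

theorem MvPolynomial.ker_constantCoeff {σ R : Type*} [CommSemiring R] :
    RingHom.ker (constantCoeff : MvPolynomial σ R →+* R) = Ideal.span (Set.range X) := by
  ext p
  rw [← Set.image_univ, mem_ideal_span_X_image, RingHom.mem_ker, constantCoeff_eq]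
  constructor
  · intro h m hm
    obtain ⟨i, hi⟩ := Finsupp.ne_iff.mp (ne_of_mem_of_not_mem hm (notMem_support_iff.mpr h))
    exact ⟨i, Set.mem_univ i, hi⟩
  · intro h
    by_contra h0
    obtain ⟨i, -, hi⟩ := h 0 (mem_support_iff.mpr h0)
    exact hi rfl

namespace Polynomial

variable {A B : Type*}

theorem mem_span_X_mul_C_of_map_eq_zero [CommSemiring A] [Semiring B] (φ : A →+* B) {s : Set A}
    (hs : RingHom.ker φ = Ideal.span s) {P : A[X]} (hmap : P.map φ = 0) (hcoeff : P.coeff 0 = 0) :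
    P ∈ Ideal.span ((fun a => X * C a) '' s) := by
  have hdivX : P.divX ∈ Ideal.span (C '' s) := by
    rw [← Ideal.map_span, ← hs, Ideal.mem_map_C_iff]
    intro k
    rw [coeff_divX, RingHom.mem_ker, ← coeff_map, hmap, coeff_zero]
  have hspan : Ideal.span {X} * Ideal.span (C '' s) = Ideal.span ((fun a => X * C a) '' s) := by
    rw [Ideal.span_mul_span', Set.singleton_mul, Set.image_image]
  rw [← X_mul_divX_add P, hcoeff, C_0, add_zero, ← hspan]
  exact Ideal.mul_mem_mul (Ideal.mem_span_singleton_self X) hdivX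

theorem exists_map_eq_and_coeff_zero_eq [Ring A] [Ring B] {φ : A →+* B} {σ : B →+* A}
    (hσ : φ.comp σ = RingHom.id B) {f : B[X]} {a : A} (h : f.coeff 0 = φ a) :
    ∃ P : A[X], P.map φ = f ∧ P.coeff 0 = a := by
  have hφσ : ∀ b, φ (σ b) = b := RingHom.congr_fun hσ
  refine ⟨f.map σ + C (a - σ (f.coeff 0)), ?_, ?_⟩
  · simp [Polynomial.map_map, hσ, hφσ, h]
  · simp

end Polynomial

theorem aeval_pxVals_eq_map_constantCoeff_comp (n : ℕ) :
    (aeval (pxVals n)).toRingHom =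
      (Polynomial.mapRingHom constantCoeff).comp (finSuccEquiv ℚ n).toRingHom :=
  MvPolynomial.ringHom_ext (fun r => by simp [finSuccEquiv_apply])
    (Fin.cases (by simp [pxVals, finSuccEquiv_X_zero])
      fun i => by simp [pxVals, finSuccEquiv_X_succ])

theorem aeval_pyVals_eq_constantCoeff_comp (n : ℕ) :
    (aeval (pyVals n)).toRingHom = Polynomial.constantCoeff.comp (finSuccEquiv ℚ n).toRingHom :=
  MvPolynomial.ringHom_ext (fun r => by simp [finSuccEquiv_apply])
    (Fin.cases (by simp [pyVals, finSuccEquiv_X_zero])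
      fun i => by simp [pyVals, finSuccEquiv_X_succ])

theorem piX_prod_piY_mk (n : ℕ) (p : MvPolynomial (Fin (n + 1)) ℚ) :
    (piX n).prod (piY n) (Ideal.Quotient.mk _ p) =
      ((finSuccEquiv ℚ n p).map constantCoeff, (finSuccEquiv ℚ n p).coeff 0) := by
  simp only [AlgHom.prod_apply, piX, piY, Ideal.Quotient.liftₐ_apply]
  exact Prod.ext (RingHom.congr_fun (aeval_pxVals_eq_map_constantCoeff_comp n) p)
    (RingHom.congr_fun (aeval_pyVals_eq_constantCoeff_comp n) p)

theorem map_finSuccEquiv_relIdeal (n : ℕ) :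
    (relIdeal n).map (finSuccEquiv ℚ n).toRingEquiv =
      Ideal.span ((fun a => Polynomial.X * Polynomial.C a) '' Set.range X) := by
  rw [relIdeal, Ideal.map_span, ← Set.range_comp, ← Set.range_comp]
  congr 2
  funext i
  simp [finSuccEquiv_X_zero, finSuccEquiv_X_succ]

theorem injective_prod_and_range_general (n : ℕ) :
    Function.Injective ((piX n).prod (piY n)) ∧
    Set.range ((piX n).prod (piY n)) =
      {fg : Polynomial ℚ × MvPolynomial (Fin n) ℚ |
        fg.1.eval 0 = MvPolynomial.eval (fun _ => (0 : ℚ)) fg.2} := by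
  constructor
  · refine (injective_iff_map_eq_zero _).mpr fun a ha => ?_
    obtain ⟨p, rfl⟩ := Ideal.Quotient.mk_surjective a
    rw [piX_prod_piY_mk, Prod.mk_eq_zero] at ha
    have hmem := Polynomial.mem_span_X_mul_C_of_map_eq_zero _ ker_constantCoeff ha.1 ha.2
    rw [← map_finSuccEquiv_relIdeal] at hmem
    exact Ideal.Quotient.eq_zero_iff_mem.mpr (Ideal.apply_mem_of_equiv_iff.mp hmem)
  · ext ⟨f, g⟩
    simp only [Set.mem_ofPred_eq, ← Polynomial.coeff_zero_eq_eval_zero, eval_zero']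
    constructor
    · rintro ⟨a, ha⟩
      obtain ⟨p, rfl⟩ := Ideal.Quotient.mk_surjective a
      rw [piX_prod_piY_mk, Prod.mk.injEq] at ha
      rw [← ha.1, ← ha.2, Polynomial.coeff_map]
    · intro h
      obtain ⟨P, hf, hg⟩ :=
        Polynomial.exists_map_eq_and_coeff_zero_eq (constantCoeff_comp_C ℚ (Fin n)) h
      obtain ⟨p, rfl⟩ := (finSuccEquiv ℚ n).surjective P
      exact ⟨_, (piX_prod_piY_mk n p).trans (Prod.ext hf hg)⟩

/-- For every integer `n ≥ 2`, the ℚ-algebra homomorphism `p ↦ (πₓ(p), π_y(p))` from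
`R_n` into `ℚ[x] × ℚ[y₁, …, yₙ]` is injective, and its range is exactly the set of
pairs `(f, g)` with `f(0) = g(0, …, 0)`; thus `R_n` is isomorphic to the fiber
product `{(f, g) : f(0) = g(0, …, 0)}`. -/
theorem injective_prod_and_range (n : ℕ) (hn : 2 ≤ n) :
    Function.Injective ((piX n).prod (piY n)) ∧
    Set.range ((piX n).prod (piY n)) =
      {fg : Polynomial ℚ × MvPolynomial (Fin n) ℚ |
        fg.1.eval 0 = MvPolynomial.eval (fun _ => (0 : ℚ)) fg.2} :=
  injective_prod_and_range_general n
end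

section
/- The ℚ-algebra homomorphism φ⁻ : ℚ[u, v, w] → ℚ[a, b] determined by u ↦ a, v ↦ b², w ↦ (a+b)² is not surjective; specifically, the polynomial b does not lie in the range of φ⁻, i.e., b is not in the ℚ-subalgebra of ℚ[a, b] generated by {a, b², (a+b)²}. -/
open MvPolynomial

/-- The ℚ-algebra homomorphism `φ⁻ : ℚ[u, v, w] → ℚ[a, b]` determined by
`u ↦ a`, `v ↦ b²`, `w ↦ (a+b)²`, where `a = X 0` and `b = X 1`. -/
noncomputable def phiMinus : MvPolynomial (Fin 3) ℚ →ₐ[ℚ] MvPolynomial (Fin 2) ℚ :=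
  aeval ![X 0, (X 1) ^ 2, (X 0 + X 1) ^ 2]

/-- The subalgebra of polynomials whose `b`-partial derivative vanishes at the origin. -/
noncomputable def Dker : Subalgebra ℚ (MvPolynomial (Fin 2) ℚ) where
  carrier := {p | constantCoeff (pderiv 1 p) = 0}
  mul_mem' := by
    intro a b ha hb
    simp only [Set.mem_setOf_eq] at *
    simp [pderiv_mul, ha, hb]
  add_mem' := by
    intro a b ha hb
    simp only [Set.mem_setOf_eq] at *
    simp [ha, hb]
  algebraMap_mem' := by
    intro r
    simp [algebraMap_eq]

lemma mem_Dker (p : MvPolynomial (Fin 2) ℚ) :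
    p ∈ Dker ↔ constantCoeff (pderiv 1 p) = 0 := Iff.rfl

/-- The map `φ⁻ : ℚ[u, v, w] → ℚ[a, b]`, `u ↦ a`, `v ↦ b²`, `w ↦ (a+b)²`, is not
surjective; specifically, `b` is not in its range, i.e. `b` is not in the
ℚ-subalgebra of `ℚ[a, b]` generated by `{a, b², (a+b)²}`. -/
theorem phiMinus_not_surjective :
    ¬ Function.Surjective phiMinus ∧
    (X 1 : MvPolynomial (Fin 2) ℚ) ∉ Set.range phiMinus ∧
    (X 1 : MvPolynomial (Fin 2) ℚ) ∉
      Algebra.adjoin ℚ ({X 0, (X 1) ^ 2, (X 0 + X 1) ^ 2} : Set (MvPolynomial (Fin 2) ℚ)) := by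
  have hadj : (X 1 : MvPolynomial (Fin 2) ℚ) ∉
      Algebra.adjoin ℚ ({X 0, (X 1) ^ 2, (X 0 + X 1) ^ 2} : Set (MvPolynomial (Fin 2) ℚ)) := by
    intro h
    have hle : Algebra.adjoin ℚ ({X 0, (X 1) ^ 2, (X 0 + X 1) ^ 2} :
        Set (MvPolynomial (Fin 2) ℚ)) ≤ Dker := by
      apply Algebra.adjoin_le
      rintro x (rfl | rfl | rfl) <;>
        rw [SetLike.mem_coe, mem_Dker] <;> simp [pow_two, pderiv_mul, pderiv_X]
    have := hle h
    rw [mem_Dker] at this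
    simp [pderiv_X] at this
  have hrange : Set.range phiMinus =
      ↑(Algebra.adjoin ℚ ({X 0, (X 1) ^ 2, (X 0 + X 1) ^ 2} : Set (MvPolynomial (Fin 2) ℚ))) := by
    rw [show ({X 0, (X 1) ^ 2, (X 0 + X 1) ^ 2} : Set (MvPolynomial (Fin 2) ℚ)) =
        Set.range ![X 0, (X 1) ^ 2, (X 0 + X 1) ^ 2] by
      ext x
      simp [Fin.exists_fin_succ, Matrix.cons_val_zero, Matrix.cons_val_one]
      tauto]
    rw [Algebra.adjoin_range_eq_range_aeval]
    rfl
  have hr : (X 1 : MvPolynomial (Fin 2) ℚ) ∉ Set.range phiMinus := by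
    rw [hrange]; exact hadj
  exact ⟨fun hs => hr (hs (X 1)), hr, hadj⟩
end

section
/- Let φ⁻ : ℚ[u, v, w] → ℚ[a, b] be the ℚ-algebra homomorphism determined by u ↦ a, v ↦ b², w ↦ (a+b)², and φ⁺ : ℚ[u, v, w] → ℚ[a, b] the one determined by u ↦ a², v ↦ b, w ↦ (a+b)². Then the sum of the ranges of φ⁻ and φ⁺, taken as ℚ-linear subspaces of ℚ[a, b], is all of ℚ[a, b]: every polynomial in ℚ[a, b] can be written as p⁻ + p⁺ with p⁻ in the range of φ⁻ and p⁺ in the range of φ⁺. -/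
open MvPolynomial

/-- The ℚ-algebra homomorphism `φ⁺ : ℚ[u, v, w] → ℚ[a, b]` determined by
`u ↦ a²`, `v ↦ b`, `w ↦ (a+b)²`, where `a = X 0` and `b = X 1`. -/
noncomputable def phiPlus : MvPolynomial (Fin 3) ℚ →ₐ[ℚ] MvPolynomial (Fin 2) ℚ :=
  aeval ![(X 0) ^ 2, X 1, (X 0 + X 1) ^ 2]

/-!
The range of `φ⁻` is a subalgebra containing `a`, `b²` and `(a+b)²`, hence, by polarization,
`ab = ((a+b)² - a² - b²) / 2`. So it contains every monomial `aⁱbʲ` with `i > 0` or `j` even.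
The remaining monomials `bʲ` lie in the range of `φ⁺`, which contains `b`.
-/

namespace Subalgebra

theorem mul_mem_of_sq_mem {R A : Type*} [CommRing R] [CommRing A] [Algebra R A]
    [Invertible (2 : R)] (S : Subalgebra R A) {a b : A}
    (ha : a ^ 2 ∈ S) (hb : b ^ 2 ∈ S) (hab : (a + b) ^ 2 ∈ S) :
    a * b ∈ S := by
  have hpolar : a * b = (⅟2 : R) • ((a + b) ^ 2 - a ^ 2 - b ^ 2) := by
    rw [show (a + b) ^ 2 - a ^ 2 - b ^ 2 = (2 : R) • (a * b) by rw [two_smul]; ring, smul_smul,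
      invOf_mul_self, one_smul]
  rw [hpolar]
  exact S.smul_mem (sub_mem (sub_mem hab ha) hb) _

theorem pow_mul_pow_mem {R A : Type*} [CommSemiring R] [CommSemiring A] [Algebra R A]
    (S : Subalgebra R A) {a b : A} (ha : a ∈ S) (hb : b ^ 2 ∈ S) (hab : a * b ∈ S)
    {i j : ℕ} (hij : 0 < i ∨ Even j) :
    a ^ i * b ^ j ∈ S := by
  rcases Nat.even_or_odd j with ⟨k, rfl⟩ | ⟨k, rfl⟩
  · rw [← two_mul, pow_mul]
    exact S.mul_mem (S.pow_mem ha i) (S.pow_mem hb k)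
  · obtain ⟨i, rfl⟩ : ∃ i', i = i' + 1 :=
      Nat.exists_eq_succ_of_ne_zero (hij.resolve_right (by simp)).ne'
    have hsplit : a ^ (i + 1) * b ^ (2 * k + 1) = a ^ i * (b ^ 2) ^ k * (a * b) := by ring
    rw [hsplit]
    exact S.mul_mem (S.mul_mem (S.pow_mem ha i) (S.pow_mem hb k)) hab

end Subalgebra

theorem MvPolynomial.monomial_one_fin_two {R : Type*} [CommSemiring R] (m : Fin 2 →₀ ℕ) :
    (monomial m 1 : MvPolynomial (Fin 2) R) = X 0 ^ m 0 * X 1 ^ m 1 := by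
  rw [monomial_eq, C_1, one_mul, Finsupp.prod_fintype _ _ fun _ => pow_zero _, Fin.prod_univ_two]

theorem MvPolynomial.submodule_eq_top_of_monomial_one_mem {σ R : Type*} [CommSemiring R]
    {N : Submodule R (MvPolynomial σ R)} (h : ∀ m, monomial m (1 : R) ∈ N) : N = ⊤ := by
  rw [eq_top_iff, ← (basisMonomials σ R).span_eq, Submodule.span_le, coe_basisMonomials]
  rintro _ ⟨m, rfl⟩
  exact h m

theorem X_zero_pow_mul_X_one_pow_mem_range_phiMinus {i j : ℕ} (hij : 0 < i ∨ Even j) :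
    (X 0 ^ i * X 1 ^ j : MvPolynomial (Fin 2) ℚ) ∈ phiMinus.range := by
  have hX : ∀ k, phiMinus (X k) = ![X 0, X 1 ^ 2, (X 0 + X 1) ^ 2] k := fun k => aeval_X _ k
  have ha : X 0 ∈ phiMinus.range := ⟨X 0, hX 0⟩
  have hb : X 1 ^ 2 ∈ phiMinus.range := ⟨X 1, hX 1⟩
  have hab : (X 0 + X 1) ^ 2 ∈ phiMinus.range := ⟨X 2, hX 2⟩
  exact phiMinus.range.pow_mul_pow_mem ha hb
    (phiMinus.range.mul_mem_of_sq_mem (phiMinus.range.pow_mem ha 2) hb hab) hij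

theorem X_one_pow_mem_range_phiPlus (j : ℕ) :
    (X 1 ^ j : MvPolynomial (Fin 2) ℚ) ∈ phiPlus.range :=
  phiPlus.range.pow_mem ⟨X 1, aeval_X _ 1⟩ j

theorem toSubmodule_range_phiMinus_sup_toSubmodule_range_phiPlus :
    Subalgebra.toSubmodule phiMinus.range ⊔ Subalgebra.toSubmodule phiPlus.range = ⊤ := by
  refine submodule_eq_top_of_monomial_one_mem fun m => ?_
  rw [monomial_one_fin_two]
  by_cases hm : 0 < m 0 ∨ Even (m 1)
  · exact Submodule.mem_sup_left (X_zero_pow_mul_X_one_pow_mem_range_phiMinus hm)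
  · rw [show m 0 = 0 by omega, pow_zero, one_mul]
    exact Submodule.mem_sup_right (X_one_pow_mem_range_phiPlus _)

/-- The sum of the ranges of `φ⁻` and `φ⁺`, as ℚ-linear subspaces of `ℚ[a, b]`,
is all of `ℚ[a, b]`: every polynomial is `p⁻ + p⁺` with `p⁻ ∈ range φ⁻` and
`p⁺ ∈ range φ⁺`. -/
theorem range_phiMinus_add_range_phiPlus_eq_top :
    ∀ h : MvPolynomial (Fin 2) ℚ,
      ∃ p q : MvPolynomial (Fin 2) ℚ,
        p ∈ Set.range phiMinus ∧ q ∈ Set.range phiPlus ∧ h = p + q := by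
  intro h
  have hh : h ∈ Subalgebra.toSubmodule phiMinus.range ⊔ Subalgebra.toSubmodule phiPlus.range := by
    rw [toSubmodule_range_phiMinus_sup_toSubmodule_range_phiPlus]
    exact Submodule.mem_top
  obtain ⟨p, hp, q, hq, rfl⟩ := Submodule.mem_sup.1 hh
  exact ⟨p, q, hp, hq, rfl⟩
end

section
/- Let k, l, n, m be natural numbers with k, l ≥ 1, and fix weight functions w : Fin k → ℕ and w' : Fin l → ℕ all of whose values are positive. Let f : ℚ[x₁, …, xₙ] → ℚ[t₁, …, t_k] be a ℚ-algebra homomorphism such that each f(xᵢ) is a w-weighted homogeneous polynomial of positive weighted degree, and let g : ℚ[y₁, …, y_m] → ℚ[s₁, …, s_l] be a ℚ-algebra homomorphism such that each g(yⱼ) is a w'-weighted homogeneous polynomial of positive weighted degree. Assume that f is not surjective and g is not surjective. Define φ⁻ : ℚ[x₁, …, xₙ, s₁, …, s_l] → ℚ[t₁, …, t_k, s₁, …, s_l] to be the ℚ-algebra homomorphism acting as f on the variables xᵢ and as the identity on the variables sⱼ, and φ⁺ : ℚ[t₁, …, t_k, y₁, …, y_m] → ℚ[t₁, …, t_k, s₁,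 …, s_l] to be the ℚ-algebra homomorphism acting as the identity on the variables tᵢ and as g on the variables yⱼ. Then the sum of the ranges of φ⁻ and φ⁺, as ℚ-linear subspaces of ℚ[t₁, …, t_k, s₁, …, s_l], is a proper subspace; in fact there exist indices β and α such that the monomial t_β·s_α does not lie in range(φ⁻) + range(φ⁺). -/
open MvPolynomial TensorProduct

set_option maxHeartbeats 1000000
set_option synthInstance.maxHeartbeats 200000

/-- The ℚ-algebra homomorphism
`φ⁻ : ℚ[x₁, …, xₙ, s₁, …, s_l] → ℚ[t₁, …, t_k, s₁, …, s_l]` acting as `f` on the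
variables `xᵢ` and as the identity on the variables `sⱼ`. -/
noncomputable def phiM (k l n : ℕ)
    (f : MvPolynomial (Fin n) ℚ →ₐ[ℚ] MvPolynomial (Fin k) ℚ) :
    MvPolynomial (Fin n ⊕ Fin l) ℚ →ₐ[ℚ] MvPolynomial (Fin k ⊕ Fin l) ℚ :=
  aeval (Sum.elim (fun i => rename Sum.inl (f (X i))) fun j => X (Sum.inr j))

/-- The ℚ-algebra homomorphism
`φ⁺ : ℚ[t₁, …, t_k, y₁, …, y_m] → ℚ[t₁, …, t_k, s₁, …, s_l]` acting as the identity
on the variables `tᵢ` and as `g` on the variables `yⱼ`. -/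
noncomputable def phiP (k l m : ℕ)
    (g : MvPolynomial (Fin m) ℚ →ₐ[ℚ] MvPolynomial (Fin l) ℚ) :
    MvPolynomial (Fin k ⊕ Fin m) ℚ →ₐ[ℚ] MvPolynomial (Fin k ⊕ Fin l) ℚ :=
  aeval (Sum.elim (fun i => X (Sum.inl i)) fun j => rename Sum.inr (g (X j)))

noncomputable def Dsplit (σ τ : Type*) :
    MvPolynomial (σ ⊕ τ) ℚ →ₐ[ℚ] MvPolynomial σ ℚ ⊗[ℚ] MvPolynomial τ ℚ :=
  aeval (Sum.elim (fun i => X i ⊗ₜ 1) (fun j => (1 : MvPolynomial σ ℚ) ⊗ₜ X j))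

theorem Dsplit_X_inl {σ τ : Type*} (i : σ) :
    Dsplit σ τ (X (Sum.inl i)) = (X i : MvPolynomial σ ℚ) ⊗ₜ 1 := by
  simp [Dsplit]

theorem Dsplit_X_inr {σ τ : Type*} (j : τ) :
    Dsplit σ τ (X (Sum.inr j)) = (1 : MvPolynomial σ ℚ) ⊗ₜ X j := by
  simp [Dsplit]

theorem Dsplit_rename_inl {σ τ : Type*} (p : MvPolynomial σ ℚ) :
    Dsplit σ τ (rename Sum.inl p) = p ⊗ₜ 1 := by
  have h : (Dsplit σ τ).comp (rename Sum.inl) = Algebra.TensorProduct.includeLeft := by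
    apply MvPolynomial.algHom_ext; intro i; simp [Dsplit]
  simpa using DFunLike.congr_fun h p

theorem Dsplit_rename_inr {σ τ : Type*} (q : MvPolynomial τ ℚ) :
    Dsplit σ τ (rename Sum.inr q) = 1 ⊗ₜ q := by
  have h : (Dsplit σ τ).comp (rename Sum.inr) = Algebra.TensorProduct.includeRight := by
    apply MvPolynomial.algHom_ext; intro i; simp [Dsplit]
  simpa using DFunLike.congr_fun h q

theorem exists_X_notMem_range {σ : Type*} {A : Type*} [CommSemiring A] [Algebra ℚ A]
    (f : A →ₐ[ℚ] MvPolynomial σ ℚ) (hfs : ¬ Function.Surjective f) :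
    ∃ β : σ, X β ∉ f.range := by
  by_contra h
  push_neg at h
  apply hfs
  have htop : f.range = ⊤ := by
    rw [eq_top_iff, ← MvPolynomial.adjoin_range_X]
    apply Algebra.adjoin_le
    rintro _ ⟨i, rfl⟩
    exact h i
  intro y
  have hy : y ∈ f.range := htop ▸ Algebra.mem_top
  exact (AlgHom.mem_range f).mp hy

theorem key (k l n m : ℕ)
    (f : MvPolynomial (Fin n) ℚ →ₐ[ℚ] MvPolynomial (Fin k) ℚ)
    (g : MvPolynomial (Fin m) ℚ →ₐ[ℚ] MvPolynomial (Fin l) ℚ)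
    (hfs : ¬ Function.Surjective f) (hgs : ¬ Function.Surjective g) :
    ∃ (β : Fin k) (α : Fin l),
      (X (Sum.inl β) * X (Sum.inr α) : MvPolynomial (Fin k ⊕ Fin l) ℚ) ∉
        Subalgebra.toSubmodule (phiM k l n f).range ⊔
          Subalgebra.toSubmodule (phiP k l m g).range := by
  obtain ⟨β, hβ⟩ := exists_X_notMem_range f hfs
  obtain ⟨α, hα⟩ := exists_X_notMem_range g hgs
  refine ⟨β, α, ?_⟩
  obtain ⟨lam, hlam1, hlam2⟩ := Submodule.exists_dual_map_eq_bot_of_notMem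
    (p := Subalgebra.toSubmodule f.range) hβ inferInstance
  obtain ⟨mu, hmu1, hmu2⟩ := Submodule.exists_dual_map_eq_bot_of_notMem
    (p := Subalgebra.toSubmodule g.range) hα inferInstance
  have hlam0 : ∀ p, lam (f p) = 0 := by
    intro p
    have : lam (f p) ∈ (Subalgebra.toSubmodule f.range).map lam :=
      Submodule.mem_map_of_mem ⟨p, rfl⟩
    simpa [hlam2] using this
  have hmu0 : ∀ q, mu (g q) = 0 := by
    intro q
    have : mu (g q) ∈ (Subalgebra.toSubmodule g.range).map mu :=
      Submodule.mem_map_of_mem ⟨q, rfl⟩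
    simpa [hmu2] using this
  set Bil : MvPolynomial (Fin k) ℚ ⊗[ℚ] MvPolynomial (Fin l) ℚ →ₗ[ℚ] ℚ :=
    (TensorProduct.lid ℚ ℚ).toLinearMap ∘ₗ TensorProduct.map lam mu with hBil
  have hBilt : ∀ p q, Bil (p ⊗ₜ q) = lam p * mu q := by
    intro p q
    simp only [hBil, LinearMap.comp_apply, TensorProduct.map_tmul,
      LinearEquiv.coe_toLinearMap, TensorProduct.lid_tmul, smul_eq_mul]
  set L : MvPolynomial (Fin k ⊕ Fin l) ℚ →ₗ[ℚ] ℚ :=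
    Bil ∘ₗ (Dsplit (Fin k) (Fin l)).toLinearMap with hL
  have hLapp : ∀ r, L r = Bil (Dsplit (Fin k) (Fin l) r) := fun r => rfl
  have h1 : (Dsplit (Fin k) (Fin l)).comp (phiM k l n f)
      = (Algebra.TensorProduct.map f (AlgHom.id ℚ _)).comp (Dsplit (Fin n) (Fin l)) := by
    apply MvPolynomial.algHom_ext
    rintro (i | j)
    · rw [AlgHom.comp_apply, AlgHom.comp_apply]
      rw [show (phiM k l n f) (X (Sum.inl i)) = rename Sum.inl (f (X i)) by
        simp [phiM]]
      rw [Dsplit_rename_inl, Dsplit_X_inl, Algebra.TensorProduct.map_tmul, map_one]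
    · rw [AlgHom.comp_apply, AlgHom.comp_apply]
      rw [show (phiM k l n f) (X (Sum.inr j)) = X (Sum.inr j) by simp [phiM]]
      rw [Dsplit_X_inr, Dsplit_X_inr, Algebra.TensorProduct.map_tmul, map_one]
      rfl
  have h2 : (Dsplit (Fin k) (Fin l)).comp (phiP k l m g)
      = (Algebra.TensorProduct.map (AlgHom.id ℚ _) g).comp (Dsplit (Fin k) (Fin m)) := by
    apply MvPolynomial.algHom_ext
    rintro (i | j)
    · rw [AlgHom.comp_apply, AlgHom.comp_apply]
      rw [show (phiP k l m g) (X (Sum.inl i)) = X (Sum.inl i) by simp [phiP]]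
      rw [Dsplit_X_inl, Dsplit_X_inl, Algebra.TensorProduct.map_tmul, map_one]
      rfl
    · rw [AlgHom.comp_apply, AlgHom.comp_apply]
      rw [show (phiP k l m g) (X (Sum.inr j)) = rename Sum.inr (g (X j)) by
        simp [phiP]]
      rw [Dsplit_rename_inr, Dsplit_X_inr, Algebra.TensorProduct.map_tmul, map_one]
  have hLM : ∀ r ∈ Subalgebra.toSubmodule (phiM k l n f).range, L r = 0 := by
    rintro r ⟨a, ha⟩
    have ha' : phiM k l n f a = r := ha
    have hz : ∀ z : MvPolynomial (Fin n) ℚ ⊗[ℚ] MvPolynomial (Fin l) ℚ,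
        Bil (Algebra.TensorProduct.map f (AlgHom.id ℚ _) z) = 0 := by
      intro z
      induction z using TensorProduct.induction_on with
      | zero => rw [map_zero, map_zero]
      | tmul p q =>
          rw [Algebra.TensorProduct.map_tmul, hBilt, hlam0, zero_mul]
      | add x y hx hy => rw [map_add, map_add, hx, hy, add_zero]
    have hc := DFunLike.congr_fun h1 a
    rw [AlgHom.comp_apply, AlgHom.comp_apply] at hc
    rw [hLapp, ← ha', hc, hz]
  have hLP : ∀ r ∈ Subalgebra.toSubmodule (phiP k l m g).range, L r = 0 := by
    rintro r ⟨a, ha⟩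
    have ha' : phiP k l m g a = r := ha
    have hz : ∀ z : MvPolynomial (Fin k) ℚ ⊗[ℚ] MvPolynomial (Fin m) ℚ,
        Bil (Algebra.TensorProduct.map (AlgHom.id ℚ _) g z) = 0 := by
      intro z
      induction z using TensorProduct.induction_on with
      | zero => rw [map_zero, map_zero]
      | tmul p q =>
          rw [Algebra.TensorProduct.map_tmul, hBilt, hmu0, mul_zero]
      | add x y hx hy => rw [map_add, map_add, hx, hy, add_zero]
    have hc := DFunLike.congr_fun h2 a
    rw [AlgHom.comp_apply, AlgHom.comp_apply] at hc
    rw [hLapp, ← ha', hc, hz]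
  have hLval : L (X (Sum.inl β) * X (Sum.inr α)) = lam (X β) * mu (X α) := by
    have hd : Dsplit (Fin k) (Fin l) (X (Sum.inl β) * X (Sum.inr α))
        = (X β : MvPolynomial (Fin k) ℚ) ⊗ₜ (X α : MvPolynomial (Fin l) ℚ) := by
      rw [map_mul, Dsplit_X_inl, Dsplit_X_inr, Algebra.TensorProduct.tmul_mul_tmul,
        mul_one, one_mul]
    rw [hLapp, hd, hBilt]
  intro hmem
  obtain ⟨p, hp, q, hq, hpq⟩ := Submodule.mem_sup.mp hmem
  have hz : L (X (Sum.inl β) * X (Sum.inr α)) = 0 := by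
    rw [← hpq, map_add, hLM p hp, hLP q hq, add_zero]
  rw [hLval] at hz
  exact mul_ne_zero hlam1 hmu1 hz

/-- Let `k, l ≥ 1`, with positive weight functions `w` on `Fin k` and `w'` on `Fin l`.
If `f : ℚ[x₁, …, xₙ] → ℚ[t₁, …, t_k]` sends each variable to a `w`-weighted homogeneous
polynomial of positive weighted degree and is not surjective, and likewise
`g : ℚ[y₁, …, y_m] → ℚ[s₁, …, s_l]` for `w'`, then the sum of the ranges of the induced
maps `φ⁻` and `φ⁺`, as ℚ-linear subspaces of `ℚ[t₁, …, t_k, s₁, …, s_l]`, is a proper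
subspace; in fact some monomial `t_β · s_α` is not in the sum. -/
theorem sum_ranges_ne_top (k l n m : ℕ) (hk : 1 ≤ k) (hl : 1 ≤ l)
    (w : Fin k → ℕ) (hw : ∀ i, 0 < w i) (w' : Fin l → ℕ) (hw' : ∀ j, 0 < w' j)
    (f : MvPolynomial (Fin n) ℚ →ₐ[ℚ] MvPolynomial (Fin k) ℚ)
    (hf : ∀ i : Fin n, ∃ d : ℕ, 0 < d ∧ IsWeightedHomogeneous w (f (X i)) d)
    (g : MvPolynomial (Fin m) ℚ →ₐ[ℚ] MvPolynomial (Fin l) ℚ)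
    (hg : ∀ j : Fin m, ∃ d : ℕ, 0 < d ∧ IsWeightedHomogeneous w' (g (X j)) d)
    (hfs : ¬ Function.Surjective f) (hgs : ¬ Function.Surjective g) :
    (Subalgebra.toSubmodule (phiM k l n f).range ⊔
        Subalgebra.toSubmodule (phiP k l m g).range ≠ ⊤) ∧
    ∃ (β : Fin k) (α : Fin l),
      (X (Sum.inl β) * X (Sum.inr α) : MvPolynomial (Fin k ⊕ Fin l) ℚ) ∉
        Subalgebra.toSubmodule (phiM k l n f).range ⊔
          Subalgebra.toSubmodule (phiP k l m g).range := by
  obtain ⟨β, α, hβα⟩ := key k l n m f g hfs hgs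
  refine ⟨?_, β, α, hβα⟩
  intro htop
  exact hβα (htop ▸ Submodule.mem_top)
end
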